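/- arXiv:2208.09735 — 8 statements merged into one kernel-verified Lean document; each statement's English description precedes it below -/
import Mathlib

section
/- For positive definite real matrices X and Y with X − Y invertible and α ∈ (0,1), the matrix αX⁻¹ + (1−α)Y⁻¹ − (αX + (1−α)Y)⁻¹ is positive definite. -/
/-!
With `Z = α X + (1 - α) Y`, the matrix in question equals
`α (1 - α) • B P Bᴴ` for `B = Z⁻¹ (X - Y)` and `P = (1 - α) X⁻¹ + α Y⁻¹`.
Since `P` is positive definite and `B` is invertible, so is this congruence.
-/

open Matrix

variable {m K : Type*} [Fintype m] [DecidableEq m] [CommRing K]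

theorem Matrix.sub_inv_eq_inv_mul_mul_sub_mul_inv {Z : Matrix m m K} (hZ : IsUnit Z.det)
    (L : Matrix m m K) : L - Z⁻¹ = Z⁻¹ * (Z * L * Z - Z) * Z⁻¹ := by
  rw [Matrix.mul_sub, Matrix.sub_mul, Matrix.mul_assoc Z,
    Matrix.nonsing_inv_mul_cancel_left _ _ hZ, Matrix.mul_nonsing_inv_cancel_right _ _ hZ,
    Matrix.nonsing_inv_mul _ hZ, Matrix.one_mul]

theorem Matrix.convexComb_mul_inv_convexComb_mul_sub {X Y : Matrix m m K} (hX : IsUnit X.det)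
    (hY : IsUnit Y.det) (a : K) :
    let Z := a • X + (1 - a) • Y
    Z * (a • X⁻¹ + (1 - a) • Y⁻¹) * Z - Z =
      (a * (1 - a)) • ((X - Y) * ((1 - a) • X⁻¹ + a • Y⁻¹) * (X - Y)) := by
  simp only [Matrix.mul_add, Matrix.add_mul, Matrix.mul_sub, Matrix.sub_mul,
    Matrix.smul_mul, Matrix.mul_smul, Matrix.mul_assoc, smul_smul, smul_add, smul_sub,
    Matrix.nonsing_inv_mul _ hX, Matrix.nonsing_inv_mul _ hY,
    Matrix.mul_nonsing_inv _ hX, Matrix.mul_nonsing_inv _ hY, Matrix.mul_one, Matrix.one_mul]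
  module

theorem inv_operator_strict_convex_posDef {n : ℕ}
    (X Y : Matrix (Fin n) (Fin n) ℝ) (hX : X.PosDef) (hY : Y.PosDef)
    (hXY : IsUnit (X - Y).det)
    (α : ℝ) (hα : α ∈ Set.Ioo (0:ℝ) 1) :
    (α • X⁻¹ + (1 - α) • Y⁻¹ - (α • X + (1 - α) • Y)⁻¹).PosDef := by
  obtain ⟨hα₀, hα₁⟩ := hα
  have hα₁' : 0 < 1 - α := sub_pos.2 hα₁
  set Z := α • X + (1 - α) • Y
  set P := (1 - α) • X⁻¹ + α • Y⁻¹
  have hZ : Z.PosDef := (hX.smul hα₀).add (hY.smul hα₁')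
  have hP : P.PosDef := (hX.inv.smul hα₁').add (hY.inv.smul hα₀)
  have hZdet : IsUnit Z.det := (isUnit_iff_isUnit_det Z).1 hZ.isUnit
  have hB : IsUnit (Z⁻¹ * (X - Y)) :=
    (isUnit_nonsing_inv_iff.2 hZ.isUnit).mul ((isUnit_iff_isUnit_det _).2 hXY)
  have hBstar : star (Z⁻¹ * (X - Y)) = (X - Y) * Z⁻¹ := by
    rw [star_mul, star_eq_conjTranspose, star_eq_conjTranspose, conjTranspose_sub,
      conjTranspose_nonsing_inv, hX.isHermitian.eq, hY.isHermitian.eq, hZ.isHermitian.eq]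
  have hconj : Z⁻¹ * ((α * (1 - α)) • ((X - Y) * P * (X - Y))) * Z⁻¹ =
      (α * (1 - α)) • (Z⁻¹ * (X - Y) * P * star (Z⁻¹ * (X - Y))) := by
    simp only [hBstar, Matrix.mul_smul, Matrix.smul_mul, Matrix.mul_assoc]
  rw [sub_inv_eq_inv_mul_mul_sub_mul_inv hZdet,
    convexComb_mul_inv_convexComb_mul_sub ((isUnit_iff_isUnit_det X).1 hX.isUnit)
      ((isUnit_iff_isUnit_det Y).1 hY.isUnit), hconj]
  exact (hB.posDef_star_right_conjugate_iff.2 hP).smul (mul_pos hα₀ hα₁')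
end

section
/- Let D₁, …, D_b be n×n real symmetric positive definite matrices and c > 0. Then (1/b)·∑ᵢ (I + c·Dᵢ)⁻¹ − (I + (c/b)·∑ᵢ Dᵢ)⁻¹ is positive semidefinite. -/
/-!
For positive definite `A`, `xᵀ A⁻¹ x = max_y (2 ⟪y, x⟫ - yᵀ A y)`, the maximum being attained at
`y = A⁻¹ x`. As a supremum of functions affine in `A`, the quadratic form of `A⁻¹` is convex in `A`,
which is the operator convexity of the inverse. The theorem is the instance with the matrices
`1 + c • Dᵢ` and equal weights `1 / b`, whose weighted mean is `1 + (c / b) • ∑ᵢ Dᵢ`.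
-/

open Matrix

variable {m ι : Type*} [Fintype m] [DecidableEq m]

theorem Matrix.PosDef.two_mul_dotProduct_sub_le_dotProduct_inv_mulVec {A : Matrix m m ℝ}
    (hA : A.PosDef) (x y : m → ℝ) : 2 * (y ⬝ᵥ x) - y ⬝ᵥ (A *ᵥ y) ≤ x ⬝ᵥ (A⁻¹ *ᵥ x) := by
  obtain ⟨u, rfl⟩ := mulVec_surjective_iff_isUnit.2 hA.isUnit x
  have hsymm : u ⬝ᵥ (A *ᵥ y) = y ⬝ᵥ (A *ᵥ u) := by
    rw [← dotProduct_transpose_mulVec, ← conjTranspose_eq_transpose_of_trivial, hA.isHermitian.eq]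
  have hnonneg := hA.posSemidef.dotProduct_mulVec_nonneg (u - y)
  rw [mulVec_mulVec, nonsing_inv_mul _ ((isUnit_iff_isUnit_det A).1 hA.isUnit), one_mulVec,
    dotProduct_comm (A *ᵥ u)]
  simp only [star_trivial, mulVec_sub, dotProduct_sub, sub_dotProduct, hsymm] at hnonneg
  linarith

theorem Matrix.posSemidef_sum_smul_inv_sub_inv_sum_smul [Fintype ι] {A : ι → Matrix m m ℝ}
    (hA : ∀ i, (A i).PosDef) {w : ι → ℝ} (hw : ∀ i, 0 < w i) (hw1 : ∑ i, w i = 1) :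
    (∑ i, w i • (A i)⁻¹ - (∑ i, w i • A i)⁻¹).PosSemidef := by
  set S := ∑ i, w i • A i
  have hS : S.PosDef :=
    posDef_sum (Finset.nonempty_of_sum_ne_zero (f := w) (by simp [hw1]))
      fun i _ => (hA i).smul (hw i)
  have hherm : (∑ i, w i • (A i)⁻¹ - S⁻¹).IsHermitian :=
    (posSemidef_sum _ fun i _ => (hA i).inv.posSemidef.smul (hw i).le).isHermitian.sub
      hS.inv.isHermitian
  refine .of_dotProduct_mulVec_nonneg hherm fun x => ?_
  set y := S⁻¹ *ᵥ x
  have hSy : S *ᵥ y = x := by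
    rw [mulVec_mulVec, mul_nonsing_inv _ ((isUnit_iff_isUnit_det S).1 hS.isUnit), one_mulVec]
  have hquad : x ⬝ᵥ (S⁻¹ *ᵥ x) ≤ ∑ i, w i * (x ⬝ᵥ ((A i)⁻¹ *ᵥ x)) :=
    calc x ⬝ᵥ (S⁻¹ *ᵥ x) = 2 * (y ⬝ᵥ x) - y ⬝ᵥ (S *ᵥ y) := by
          rw [hSy, dotProduct_comm]; ring
      _ = ∑ i, w i * (2 * (y ⬝ᵥ x) - y ⬝ᵥ (A i *ᵥ y)) := by
          simp only [mul_sub, Finset.sum_sub_distrib, ← Finset.sum_mul, hw1, one_mul, S,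
            sum_mulVec, smul_mulVec, dotProduct_sum, dotProduct_smul, smul_eq_mul]
      _ ≤ ∑ i, w i * (x ⬝ᵥ ((A i)⁻¹ *ᵥ x)) :=
          Finset.sum_le_sum fun i _ => mul_le_mul_of_nonneg_left
            ((hA i).two_mul_dotProduct_sub_le_dotProduct_inv_mulVec x y) (hw i).le
  simpa [sub_mulVec, sum_mulVec, dotProduct_sum, smul_mulVec] using hquad

theorem avg_inv_sub_inv_avg_posSemidef {n b : ℕ} (hb : 1 ≤ b)
    (D : Fin b → Matrix (Fin n) (Fin n) ℝ) (hD : ∀ i, (D i).PosDef)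
    (c : ℝ) (hc : 0 < c) :
    (((b : ℝ)⁻¹) • (∑ i, (1 + c • D i)⁻¹) - (1 + (c / b) • ∑ i, D i)⁻¹).PosSemidef := by
  have hb0 : (b : ℝ) ≠ 0 := Nat.cast_ne_zero.2 (Nat.one_le_iff_ne_zero.1 hb)
  have hmean : 1 + (c / b) • ∑ i, D i = ∑ i, (b : ℝ)⁻¹ • (1 + c • D i) := by
    rw [← Finset.smul_sum, Finset.sum_add_distrib, ← Finset.smul_sum, Finset.sum_const,
      Finset.card_fin, ← Nat.cast_smul_eq_nsmul ℝ, smul_add, smul_smul, smul_smul,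
      inv_mul_cancel₀ hb0, one_smul, div_eq_inv_mul]
  rw [hmean, Finset.smul_sum]
  exact posSemidef_sum_smul_inv_sub_inv_sum_smul (fun i => PosDef.one.add ((hD i).smul hc))
    (fun _ => by positivity) (by simp [hb0])
end

section
/- Let D be a block-diagonal matrix with symmetric positive definite blocks D₁, …, D_b (each p×p), let ρ > 0 exceed the largest eigenvalue of every Dᵢ, let Φ = (I + D/ρ)⁻¹, and let P = (1/b)·(J_b ⊗ I_p) where J_b is the b×b all-ones matrix. Then every eigenvalue of the matrix M = (I − P − Φ)(I − 2P) is real. -/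
open Matrix

/-- The averaging projection `P = (1/b)·(J_b ⊗ I_p)` viewed on the index type
`Fin p × Fin b` used by `Matrix.blockDiagonal`. -/
noncomputable def avgProj (p b : ℕ) : Matrix (Fin p × Fin b) (Fin p × Fin b) ℝ :=
  fun x y => if x.1 = y.1 then (b : ℝ)⁻¹ else 0

/-! With `E = ρ⁻¹ D` (block diagonal) we have `0 ≤ E < 1`, so `S = 2Φ - 1 = Φ (1 - E²) Φ` is
positive definite. Since `P` is an idempotent, `M S = S Mᵀ`, i.e. `M S` is symmetric. If `M v = μ v`
and `S w = v`, then `w* (M S) w = μ · w* S w`, where both quadratic forms are real and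
`w* S w > 0`; hence `μ` is real. -/

open scoped MatrixOrder ComplexOrder

theorem IsIdempotentElem.isSelfAdjoint_mul_two_nsmul_sub_one {R : Type*} [Ring R] [StarRing R]
    {P Φ : R} (hP : IsIdempotentElem P) (hPs : IsSelfAdjoint P) (hΦ : IsSelfAdjoint Φ) :
    IsSelfAdjoint ((1 - P - Φ) * (1 - 2 • P) * (2 • Φ - 1)) := by
  have hcomm : (1 - P - Φ) * (1 - 2 • P) * (2 • Φ - 1) - (2 • Φ - 1) * (1 - 2 • P) * (1 - P - Φ)
      = 4 • ((P * P - P) * Φ - Φ * (P * P - P)) := by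
    noncomm_ring
  rw [hP.eq, sub_self, zero_mul, mul_zero, sub_self, smul_zero, sub_eq_zero] at hcomm
  rw [IsSelfAdjoint, star_mul, star_mul, star_sub, star_sub, star_sub, star_sub, star_one,
    star_nsmul, star_nsmul, hPs.star_eq, hΦ.star_eq, ← mul_assoc, hcomm]

namespace Matrix

variable {𝕜 n : Type*} [RCLike 𝕜] [Fintype n] [DecidableEq n]

theorem PosDef.blockDiagonal {m o : Type*} [Fintype m] [Fintype o] [DecidableEq o]
    {D : o → Matrix m m 𝕜} (hD : ∀ i, (D i).PosDef) : (Matrix.blockDiagonal D).PosDef := by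
  refine posDef_iff_dotProduct_mulVec.mpr
    ⟨isHermitian_blockDiagonal_iff.mpr fun i => (hD i).1, fun x hx => ?_⟩
  let block (i : o) : m → 𝕜 := fun j => x (j, i)
  have hsum : star x ⬝ᵥ Matrix.blockDiagonal D *ᵥ x = ∑ i, star (block i) ⬝ᵥ D i *ᵥ block i := by
    simp only [dotProduct, mulVec, blockDiagonal_apply, Fintype.sum_prod_type, block,
      Pi.star_apply, ite_mul, zero_mul, Finset.sum_ite_eq, Finset.mem_univ, if_true]
    exact Finset.sum_comm
  obtain ⟨⟨j, i⟩, hji⟩ := Function.ne_iff.mp hx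
  rw [hsum]
  exact Finset.sum_pos' (fun i _ => (hD i).posSemidef.dotProduct_mulVec_nonneg _)
    ⟨i, Finset.mem_univ _, (hD i).dotProduct_mulVec_pos (Function.ne_iff.mpr ⟨j, hji⟩)⟩

theorem posDef_smul_one_sub_of_forall_spectrum_lt {A : Matrix n n 𝕜} (hA : A.IsHermitian) {ρ : ℝ}
    (h : ∀ x ∈ spectrum ℝ A, x < ρ) : (ρ • 1 - A).PosDef := by
  have hsa : IsSelfAdjoint (ρ • 1 - A) :=
    ((IsSelfAdjoint.all ρ).smul (.one _)).sub hA.isSelfAdjoint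
  rw [← isStrictlyPositive_iff_posDef,
    StarOrderedRing.isStrictlyPositive_iff_spectrum_pos (R := ℝ) _ hsa,
    ← Algebra.algebraMap_eq_smul_one, ← spectrum.singleton_sub_eq]
  rintro _ ⟨_, rfl, x, hx, rfl⟩
  simpa using h x hx

theorem PosSemidef.posDef_one_sub_mul_self {E : Matrix n n 𝕜} (hE : E.PosSemidef)
    (hE1 : (1 - E).PosDef) : (1 - E * E).PosDef := by
  obtain ⟨R, hR, rfl⟩ : ∃ R : Matrix n n 𝕜, R.IsHermitian ∧ R * R = E :=
    ⟨CFC.sqrt E, (CFC.sqrt_nonneg E).posSemidef.1, CFC.sqrt_mul_sqrt_self E hE.nonneg⟩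
  have hsplit : 1 - R * R * (R * R) = (1 - R * R) + R * (1 - R * R) * Rᴴ := by
    rw [hR.eq]; noncomm_ring
  rw [hsplit]
  exact hE1.add_posSemidef (hE1.posSemidef.mul_mul_conjTranspose_same R)

theorem PosSemidef.posDef_two_nsmul_inv_one_add_sub_one {E : Matrix n n 𝕜} (hE : E.PosSemidef)
    (hE1 : (1 - E).PosDef) : (2 • (1 + E)⁻¹ - 1).PosDef := by
  have hA : (1 + E).PosDef := PosDef.one.add_posSemidef hE
  have hdet : IsUnit (1 + E).det := (isUnit_iff_isUnit_det _).mp hA.isUnit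
  set Φ := (1 + E)⁻¹
  have hΦA : Φ * (1 + E) = 1 := nonsing_inv_mul _ hdet
  have hAΦ : (1 + E) * Φ = 1 := mul_nonsing_inv _ hdet
  have hfac : 2 • Φ - 1 = Φ * (1 - E * E) * star Φ := by
    rw [show star Φ = Φ from hA.inv.1.eq]
    calc 2 • Φ - 1 = Φ * (2 - (1 + E)) := by rw [mul_sub, hΦA]; noncomm_ring
      _ = Φ * (1 - E) * ((1 + E) * Φ) := by rw [hAΦ]; noncomm_ring
      _ = Φ * (1 - E * E) * Φ := by noncomm_ring
  rw [hfac]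
  exact hA.inv.isUnit.posDef_star_right_conjugate_iff.mpr (hE.posDef_one_sub_mul_self hE1)

theorem im_eq_zero_of_mem_spectrum_of_isHermitian_mul {M S : Matrix n n 𝕜} (hS : S.PosDef)
    (hMS : (M * S).IsHermitian) {μ : 𝕜} (hμ : μ ∈ spectrum 𝕜 M) : RCLike.im μ = 0 := by
  rw [← spectrum_toLin', ← Module.End.hasEigenvalue_iff_mem_spectrum] at hμ
  obtain ⟨v, hv⟩ := hμ.exists_hasEigenvector
  obtain ⟨w, rfl⟩ := mulVec_surjective_iff_isUnit.mpr hS.isUnit v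
  have hw : w ≠ 0 := by rintro rfl; exact hv.2 (mulVec_zero S)
  have hquad : star w ⬝ᵥ (M * S) *ᵥ w = μ * (star w ⬝ᵥ S *ᵥ w) := by
    rw [← mulVec_mulVec, ← toLin'_apply, hv.apply_eq_smul, dotProduct_smul, smul_eq_mul]
  have him := hMS.im_star_dotProduct_mulVec_self w
  rw [hquad, RCLike.mul_im, hS.1.im_star_dotProduct_mulVec_self, mul_zero, zero_add] at him
  exact (mul_eq_zero.mp him).resolve_right (hS.re_dotProduct_pos hw).ne'

theorem PosDef.map_algebraMap {S : Matrix n n ℝ} (hS : S.PosDef) :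
    (S.map (algebraMap ℝ 𝕜)).PosDef := by
  obtain ⟨R, hR, rfl⟩ : ∃ R : Matrix n n ℝ, R.IsHermitian ∧ R * R = S :=
    ⟨CFC.sqrt S, (CFC.sqrt_nonneg S).posSemidef.1, CFC.sqrt_mul_sqrt_self S hS.posSemidef.nonneg⟩
  have hRu : IsUnit (R.map (algebraMap ℝ 𝕜)) :=
    (isUnit_of_mul_isUnit_left hS.isUnit).map (algebraMap ℝ 𝕜).mapMatrix
  have hRh : (R.map (algebraMap ℝ 𝕜)).IsHermitian := hR.map _ fun x => by simp
  have hconj : (R * R).map (algebraMap ℝ 𝕜)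
      = star (R.map (algebraMap ℝ 𝕜)) * 1 * R.map (algebraMap ℝ 𝕜) := by
    rw [Matrix.map_mul, hRh.star_eq, mul_one]
  rw [hconj]
  exact hRu.posDef_star_left_conjugate_iff.mpr PosDef.one

theorem im_eq_zero_of_mem_spectrum_map_of_isHermitian_mul {M S : Matrix n n ℝ} (hS : S.PosDef)
    (hMS : (M * S).IsHermitian) {μ : 𝕜} (hμ : μ ∈ spectrum 𝕜 (M.map (algebraMap ℝ 𝕜))) :
    RCLike.im μ = 0 :=
  im_eq_zero_of_mem_spectrum_of_isHermitian_mul hS.map_algebraMap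
    (by simpa only [Matrix.map_mul] using hMS.map (algebraMap ℝ 𝕜) fun x => by simp) hμ

end Matrix

theorem isIdempotentElem_avgProj (p b : ℕ) : IsIdempotentElem (avgProj p b) := by
  ext ⟨j, i⟩ ⟨j', i'⟩
  have hb : (b : ℝ) ≠ 0 := Nat.cast_ne_zero.mpr i.pos.ne'
  by_cases h : j = j'
  · simp only [h, mul_apply, avgProj, mul_ite, ite_mul, zero_mul, mul_zero, Fintype.sum_prod_type,
      Finset.sum_ite_irrel, Finset.sum_const_zero, Finset.sum_ite_eq', Finset.mem_univ, if_true,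
      Finset.sum_const, Finset.card_univ, Fintype.card_fin, nsmul_eq_mul]
    field_simp
  · simp [mul_apply, avgProj, Fintype.sum_prod_type, h]

theorem isHermitian_avgProj (p b : ℕ) : (avgProj p b).IsHermitian := by
  ext x y
  simp [avgProj, eq_comm]

theorem admm_map_real_eigenvalues_large_step {p b : ℕ}
    (D : Fin b → Matrix (Fin p) (Fin p) ℝ) (hD : ∀ i, (D i).PosDef)
    (ρ : ℝ) (hρ : 0 < ρ)
    (hspec : ∀ i, ∀ x ∈ spectrum ℝ (D i), x < ρ) :
    ∀ μ ∈ spectrum ℂ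
        ((((1 : Matrix (Fin p × Fin b) (Fin p × Fin b) ℝ) - avgProj p b -
            (1 + ρ⁻¹ • Matrix.blockDiagonal D)⁻¹) *
          (1 - (2 : ℝ) • avgProj p b)).map (algebraMap ℝ ℂ)),
      μ.im = 0 := by
  intro μ hμ
  have hρ' : 0 < ρ⁻¹ := inv_pos.mpr hρ
  set E := ρ⁻¹ • blockDiagonal D
  have hE : E.PosSemidef := ((PosDef.blockDiagonal hD).smul hρ').posSemidef
  have hE1 : (1 - E).PosDef := by
    have hblocks : 1 - E = blockDiagonal fun i => ρ⁻¹ • (ρ • 1 - D i) := by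
      simp only [smul_sub, smul_smul, inv_mul_cancel₀ hρ.ne', one_smul]
      rw [show (fun i => 1 - ρ⁻¹ • D i) = 1 - ρ⁻¹ • D from rfl, blockDiagonal_sub,
        blockDiagonal_one, blockDiagonal_smul]
    rw [hblocks]
    exact PosDef.blockDiagonal fun i =>
      (posDef_smul_one_sub_of_forall_spectrum_lt (hD i).1 (hspec i)).smul hρ'
  have hΦ : IsSelfAdjoint (1 + E)⁻¹ := (PosDef.one.add_posSemidef hE).inv.1
  rw [ofNat_smul_eq_nsmul (R := ℝ) 2] at hμ
  exact im_eq_zero_of_mem_spectrum_map_of_isHermitian_mul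
    (hE.posDef_two_nsmul_inv_one_add_sub_one hE1)
    ((isIdempotentElem_avgProj p b).isSelfAdjoint_mul_two_nsmul_sub_one
      (isHermitian_avgProj p b) hΦ) hμ
end

section
/- Let X̃ be an n×p real matrix with X̃ᵀX̃ positive definite, b ≥ 2, ρ > 0, and let D̄ = (1/b)·X̃ᵀX̃. Define M_s as the bp×bp linear map whose action on v = (v₁,…,v_b) is given blockwise by (M_s v)ᵢ = (I − (I + D̄/ρ)⁻¹)vᵢ + (2(I + D̄/ρ)⁻¹ − I)·v̄, where v̄ = (1/b)∑ⱼ vⱼ. Then a nonzero real number λ is an eigenvalue of M_s if and only if bρ(1−λ)/λ is an eigenvalue of X̃ᵀX̃ or bρλ/(1−λ) is an eigenvalue of X̃ᵀX̃. -/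
/-!
Write `M = diag(B) + diag(C)·P` for a block matrix acting on `v = (v₁, …, v_b)` by
`(M v)ₖ = B vₖ + C v̄`. Averaging the blocks of `M v = λ v` gives `(B + C) v̄ = λ v̄`, and when
`v̄ = 0` every block satisfies `B vₖ = λ vₖ`; conversely `(u, …, u)` and `(u, -u, 0, …, 0)`
realise the eigenvalues of `B + C` and of `B` (the latter needs `b ≥ 2`). For `M_s`,
`B + C = Φ̄` and `B = I - Φ̄` with `Φ̄ = (I + D̄/ρ)⁻¹`, and `μ ∈ σ(Φ̄) ↔ ρ(1 - μ)/μ ∈ σ(D̄)`.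
Since `x / 0 = 0` and neither `Φ̄` nor `D̄` has eigenvalue `0`, this equivalence also holds at
`μ = 0`, which is why the case `λ = 1` needs no separate treatment.
-/

open Matrix

/-- The ADMM mapping matrix when all `b` local covariance matrices are equal to `D̄`:
blockwise, `(M_s v)ᵢ = (I − Φ̄)vᵢ + (2Φ̄ − I)·v̄` where `Φ̄ = (I + D̄/ρ)⁻¹`. -/
noncomputable def admmMs (p b : ℕ) (ρ : ℝ) (Dbar : Matrix (Fin p) (Fin p) ℝ) :
    Matrix (Fin p × Fin b) (Fin p × Fin b) ℝ :=
  Matrix.blockDiagonal (fun _ : Fin b => 1 - (1 + ρ⁻¹ • Dbar)⁻¹) +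
    Matrix.blockDiagonal (fun _ : Fin b => (2 : ℝ) • (1 + ρ⁻¹ • Dbar)⁻¹ - 1) * avgProj p b

section Spectrum

variable {K m : Type*} [Field K] [Fintype m] [DecidableEq m]

theorem Matrix.mem_spectrum_iff_exists_mulVec_eq_smul (M : Matrix m m K) (t : K) :
    t ∈ spectrum K M ↔ ∃ v ≠ 0, M *ᵥ v = t • v := by
  rw [← Matrix.spectrum_toLin', ← Module.End.hasEigenvalue_iff_mem_spectrum,
    Module.End.hasEigenvalue_iff, Submodule.ne_bot_iff]
  simp only [Module.End.mem_eigenspace_iff, Matrix.toLin'_apply]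
  exact exists_congr fun v => and_comm

theorem Matrix.mem_spectrum_one_sub_iff (M : Matrix m m K) (t : K) :
    t ∈ spectrum K (1 - M) ↔ 1 - t ∈ spectrum K M := by
  rw [spectrum.mem_iff, spectrum.mem_iff, ← IsUnit.neg_iff]
  congr! 2
  simp only [map_sub, map_one]
  abel

theorem Matrix.mem_spectrum_inv_smul_iff {r : K} (hr : r ≠ 0) (M : Matrix m m K) (t : K) :
    t ∈ spectrum K (r⁻¹ • M) ↔ r * t ∈ spectrum K M := by
  lift r to Kˣ using hr.isUnit
  have h := spectrum.smul_mem_smul_iff (a := M) (s := r * t) (r := r⁻¹)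
  rwa [Units.smul_def, Units.smul_def, smul_eq_mul, Units.inv_mul_cancel_left,
    Units.val_inv_eq_inv_val] at h

theorem Matrix.mem_spectrum_inv_one_add_smul_iff {D : Matrix m m K} {ρ : K} (hρ : ρ ≠ 0)
    (hD : IsUnit D) (hS : IsUnit (1 + ρ⁻¹ • D)) (μ : K) :
    μ ∈ spectrum K (1 + ρ⁻¹ • D)⁻¹ ↔ ρ * (1 - μ) / μ ∈ spectrum K D := by
  obtain ⟨S, hS⟩ := hS
  rcases eq_or_ne μ 0 with rfl | hμ
  · rw [sub_zero, div_zero, ← hS, ← coe_units_inv]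
    exact iff_of_false (Units.zero_notMem_spectrum K _) (spectrum.zero_notMem_iff K |>.mpr hD)
  calc μ ∈ spectrum K (1 + ρ⁻¹ • D)⁻¹
        ↔ (μ⁻¹ - 1) + 1 ∈ spectrum K (algebraMap K _ 1 + ρ⁻¹ • D) := by
        rw [sub_add_cancel, map_one, ← hS, ← coe_units_inv, spectrum.inv₀_mem_iff]
    _ ↔ ρ * (μ⁻¹ - 1) ∈ spectrum K D := by
        rw [spectrum.add_mem_add_iff, mem_spectrum_inv_smul_iff hρ]
    _ ↔ ρ * (1 - μ) / μ ∈ spectrum K D := by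
        rw [show ρ * (1 - μ) / μ = ρ * (μ⁻¹ - 1) by field_simp]

end Spectrum

section Blocks

variable {p b : ℕ}

noncomputable def blockMean (v : Fin p × Fin b → ℝ) : Fin p → ℝ :=
  (b : ℝ)⁻¹ • ∑ k, fun j => v (j, k)

noncomputable def blockDiagAddAvg (p b : ℕ) (B C : Matrix (Fin p) (Fin p) ℝ) :
    Matrix (Fin p × Fin b) (Fin p × Fin b) ℝ :=
  blockDiagonal (fun _ : Fin b => B) + blockDiagonal (fun _ : Fin b => C) * avgProj p b

lemma blockDiagonal_const_mulVec_apply (C : Matrix (Fin p) (Fin p) ℝ)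
    (v : Fin p × Fin b → ℝ) (i : Fin p) (k : Fin b) :
    (blockDiagonal (fun _ : Fin b => C) *ᵥ v) (i, k) = (C *ᵥ fun j => v (j, k)) i := by
  simp only [mulVec, dotProduct, Fintype.sum_prod_type, blockDiagonal_apply]
  rw [Finset.sum_comm]
  simp

lemma avgProj_mulVec (v : Fin p × Fin b → ℝ) : avgProj p b *ᵥ v = fun q => blockMean v q.1 := by
  ext ⟨i, k⟩
  simp only [mulVec, dotProduct, Fintype.sum_prod_type, avgProj, blockMean, ite_mul, zero_mul]
  rw [Finset.sum_comm]
  simp [Finset.mul_sum]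

lemma blockDiagAddAvg_mulVec_apply (B C : Matrix (Fin p) (Fin p) ℝ) (v : Fin p × Fin b → ℝ)
    (i : Fin p) (k : Fin b) :
    (blockDiagAddAvg p b B C *ᵥ v) (i, k) = (B *ᵥ fun j => v (j, k)) i + (C *ᵥ blockMean v) i := by
  rw [blockDiagAddAvg, add_mulVec, ← mulVec_mulVec, Pi.add_apply, blockDiagonal_const_mulVec_apply,
    blockDiagonal_const_mulVec_apply, avgProj_mulVec]

lemma blockMean_blockDiagAddAvg_mulVec (hb : b ≠ 0) (B C : Matrix (Fin p) (Fin p) ℝ)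
    (v : Fin p × Fin b → ℝ) :
    blockMean (blockDiagAddAvg p b B C *ᵥ v) = (B + C) *ᵥ blockMean v := by
  have hblock : ∀ k, (fun j => (blockDiagAddAvg p b B C *ᵥ v) (j, k)) =
      B *ᵥ (fun j => v (j, k)) + C *ᵥ blockMean v := fun k =>
    funext fun i => blockDiagAddAvg_mulVec_apply B C v i k
  have hb' : (b : ℝ) ≠ 0 := by exact_mod_cast hb
  rw [blockMean]
  simp_rw [hblock]
  rw [Finset.sum_add_distrib, ← mulVec_sum, Finset.sum_const, Finset.card_univ, Fintype.card_fin,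
    smul_add, ← mulVec_smul, ← Nat.cast_smul_eq_nsmul ℝ, smul_smul, inv_mul_cancel₀ hb', one_smul,
    add_mulVec]
  rfl

lemma blockDiagAddAvg_mulVec_mul_apply (B C : Matrix (Fin p) (Fin p) ℝ) (w : Fin b → ℝ)
    (u : Fin p → ℝ) (i : Fin p) (k : Fin b) :
    (blockDiagAddAvg p b B C *ᵥ fun q => w q.2 * u q.1) (i, k) =
      w k * (B *ᵥ u) i + (b : ℝ)⁻¹ * (∑ l, w l) * (C *ᵥ u) i := by
  have hmean :
      blockMean (fun q : Fin p × Fin b => w q.2 * u q.1) = ((b : ℝ)⁻¹ * ∑ l, w l) • u := by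
    ext j
    simp [blockMean, Finset.sum_mul, Finset.mul_sum, mul_assoc]
  rw [blockDiagAddAvg_mulVec_apply, hmean, mulVec_smul,
    show (fun j => w k * u j) = w k • u from rfl, mulVec_smul]
  simp [mul_assoc]

lemma blockMean_smul (t : ℝ) (v : Fin p × Fin b → ℝ) : blockMean (t • v) = t • blockMean v := by
  simp only [blockMean, smul_comm t]
  congr 1
  rw [Finset.smul_sum]
  rfl

theorem spectrum_blockDiagAddAvg (hb : 2 ≤ b) (B C : Matrix (Fin p) (Fin p) ℝ) :
    spectrum ℝ (blockDiagAddAvg p b B C) = spectrum ℝ (B + C) ∪ spectrum ℝ B := by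
  ext t
  simp only [Set.mem_union, Matrix.mem_spectrum_iff_exists_mulVec_eq_smul]
  constructor
  · rintro ⟨v, hv, hMv⟩
    by_cases hmean : blockMean v = 0
    · obtain ⟨⟨i, k⟩, hik⟩ := Function.ne_iff.mp hv
      refine Or.inr ⟨fun j => v (j, k), Function.ne_iff.mpr ⟨i, hik⟩, funext fun j => ?_⟩
      have := blockDiagAddAvg_mulVec_apply B C v j k
      rw [hMv, hmean, mulVec_zero, Pi.zero_apply, add_zero] at this
      exact this.symm
    · refine Or.inl ⟨blockMean v, hmean, ?_⟩
      rw [← blockMean_blockDiagAddAvg_mulVec (by omega), hMv, blockMean_smul]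
  · have hb0 : (b : ℝ) ≠ 0 := by positivity
    rintro (⟨u, hu, hBC⟩ | ⟨u, hu, hB⟩)
    · refine ⟨fun q => (1 : Fin b → ℝ) q.2 * u q.1, fun h => hu (funext fun j => ?_), ?_⟩
      · simpa using congrFun h (j, ⟨0, by omega⟩)
      ext ⟨i, k⟩
      have hw : (b : ℝ)⁻¹ * ∑ l, (1 : Fin b → ℝ) l = 1 := by simp [hb0]
      rw [blockDiagAddAvg_mulVec_mul_apply, hw, Pi.one_apply, one_mul, one_mul, ← Pi.add_apply,
        ← add_mulVec, hBC]
      simp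
    · set w : Fin b → ℝ := Pi.single ⟨0, by omega⟩ 1 - Pi.single ⟨1, by omega⟩ 1
      have hw : ∑ l, w l = 0 := by simp [w, Finset.sum_sub_distrib]
      refine ⟨fun q => w q.2 * u q.1, fun h => hu (funext fun j => ?_), ?_⟩
      · simpa [w, Fin.ext_iff] using congrFun h (j, ⟨0, by omega⟩)
      ext ⟨i, k⟩
      rw [blockDiagAddAvg_mulVec_mul_apply, hw, mul_zero, zero_mul, add_zero, hB]
      simp only [Pi.smul_apply, smul_eq_mul]
      ring

end Blocks

theorem eigenvalues_of_Ms {n p b : ℕ} (hb : 2 ≤ b)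
    (X : Matrix (Fin n) (Fin p) ℝ) (hX : (Xᵀ * X).PosDef)
    (ρ : ℝ) (hρ : 0 < ρ) :
    ∀ lam : ℝ, lam ≠ 0 →
      (lam ∈ spectrum ℝ (admmMs p b ρ (((b : ℝ))⁻¹ • (Xᵀ * X))) ↔
        (b * ρ * (1 - lam) / lam ∈ spectrum ℝ (Xᵀ * X) ∨
         b * ρ * lam / (1 - lam) ∈ spectrum ℝ (Xᵀ * X))) := by
  intro lam _
  set A := Xᵀ * X
  have hb0 : (b : ℝ) ≠ 0 := by positivity
  have hD : ((b : ℝ)⁻¹ • A).PosDef := hX.smul (by positivity)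
  have hS : (1 + ρ⁻¹ • (b : ℝ)⁻¹ • A).PosDef := PosDef.one.add (hD.smul (by positivity))
  set Φ := (1 + ρ⁻¹ • (b : ℝ)⁻¹ • A)⁻¹
  have hΦ (μ : ℝ) : μ ∈ spectrum ℝ Φ ↔ b * ρ * (1 - μ) / μ ∈ spectrum ℝ A := by
    rw [mem_spectrum_inv_one_add_smul_iff hρ.ne' hD.isUnit hS.isUnit,
      mem_spectrum_inv_smul_iff hb0, ← mul_div_assoc, mul_assoc]
  have hsum : (1 - Φ) + ((2 : ℝ) • Φ - 1) = Φ := by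
    rw [two_smul]
    abel
  change lam ∈ spectrum ℝ (blockDiagAddAvg p b (1 - Φ) ((2 : ℝ) • Φ - 1)) ↔ _
  rw [spectrum_blockDiagAddAvg hb, hsum, Set.mem_union, mem_spectrum_one_sub_iff, hΦ, hΦ,
    sub_sub_cancel]
end

section
/- Let X̃ᵀX̃ be symmetric positive definite with smallest eigenvalue q̲ and largest eigenvalue q̄, and suppose ρ > q̄ and b ≥ 2. Then the spectral radius of the matrix M_s (the ADMM mapping matrix when all b local covariance matrices equal (1/b)X̃ᵀX̃) equals bρ/(bρ + q̲). -/
open Matrix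

/-!
Write `T` for the block-diagonal matrix repeating `Φ̄ = (1 + XᵀX/(bρ))⁻¹` and `P` for the
block-averaging projection. Then `M_s = (1 - T)(1 - P) + T P`, and since `P` is an idempotent
commuting with `T`, `μ - M_s` is invertible as soon as `μ - T` and `μ - (1 - T)` are: every
eigenvalue of `M_s` is `φ` or `1 - φ` for an eigenvalue `φ = bρ/(bρ + q)` of `Φ̄`. Conversely an
eigenvector of `Φ̄` copied into every block is an eigenvector of `M_s`. As `M_s` is symmetric its
complex spectrum is real, and `q ≤ q̄ < ρ ≤ bρ` gives `1 - φ ≤ φ ≤ bρ/(bρ + q̲)`.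
-/

section IdempotentSplitting

variable {R A : Type*} [CommRing R] [Ring A] [Algebra R A]

lemma IsIdempotentElem.isUnit_mul_one_sub_add_mul {a c e : A} (he : IsIdempotentElem e)
    (ha : IsUnit a) (hc : IsUnit c) (hae : Commute a e) (hce : Commute c e) :
    IsUnit (a * (1 - e) + c * e) := by
  obtain ⟨a, rfl⟩ := ha
  obtain ⟨c, rfl⟩ := hc
  have hae' : Commute (↑a⁻¹ : A) e := hae.units_inv_left
  have hce' : Commute (↑c⁻¹ : A) e := hce.units_inv_left
  refine ⟨⟨_, ↑a⁻¹ * (1 - e) + ↑c⁻¹ * e, ?_, ?_⟩, rfl⟩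
  · simp only [add_mul, mul_add, mul_sub, sub_mul, mul_one, mul_assoc, hae'.eq, hce'.eq]
    simp [← mul_assoc, he.eq, hae.eq, hce.eq]
  · simp only [add_mul, mul_add, mul_sub, sub_mul, mul_one, mul_assoc, hae.eq, hce.eq]
    simp [← mul_assoc, he.eq, hae'.eq, hce'.eq]

lemma IsIdempotentElem.mem_spectrum_or_one_sub_mem_spectrum {t e : A} (he : IsIdempotentElem e)
    (hte : Commute t e) {μ : R} (hμ : μ ∈ spectrum R ((1 - t) * (1 - e) + t * e)) :
    μ ∈ spectrum R t ∨ 1 - μ ∈ spectrum R t := by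
  by_contra! h
  obtain ⟨hμt, hμt'⟩ := h
  rw [spectrum.notMem_iff] at hμt hμt'
  have hsplit : algebraMap R A μ - ((1 - t) * (1 - e) + t * e)
      = -(algebraMap R A (1 - μ) - t) * (1 - e) + (algebraMap R A μ - t) * e := by
    rw [map_sub, map_one]
    noncomm_ring
  refine spectrum.notMem_iff.mpr ?_ hμ
  rw [hsplit]
  exact he.isUnit_mul_one_sub_add_mul hμt'.neg hμt
    ((Algebra.commute_algebraMap_left _ e).sub_left hte).neg_left
    ((Algebra.commute_algebraMap_left _ e).sub_left hte)

lemma IsSelfAdjoint.one_sub_mul_one_sub_add_mul [StarRing A] {t e : A} (ht : IsSelfAdjoint t)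
    (he : IsSelfAdjoint e) (hte : Commute t e) : IsSelfAdjoint ((1 - t) * (1 - e) + t * e) := by
  have hone := IsSelfAdjoint.one A
  refine (((hone.sub ht).commute_iff (hone.sub he)).mp ?_).add ((ht.commute_iff he).mp hte)
  exact (Commute.one_left _).sub_left ((Commute.one_right _).sub_right hte)

end IdempotentSplitting

lemma spectralRadius_eq_of_forall_norm_le {𝕜 A : Type*} [NormedField 𝕜] [Ring A] [Algebra 𝕜 A]
    {a : A} {k₀ : 𝕜} (hk₀ : k₀ ∈ spectrum 𝕜 a) (hle : ∀ k ∈ spectrum 𝕜 a, ‖k‖ ≤ ‖k₀‖) :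
    spectralRadius 𝕜 a = ‖k₀‖₊ :=
  le_antisymm (iSup₂_le fun k hk => by exact_mod_cast hle k hk)
    (le_iSup₂ (f := fun k _ => (‖k‖₊ : ENNReal)) k₀ hk₀)

namespace Matrix

section Field

variable {K n : Type*} [Field K] [Fintype n] [DecidableEq n]

lemma mem_spectrum_iff_exists_mulVec_eq_smul_s9 {A : Matrix n n K} {μ : K} :
    μ ∈ spectrum K A ↔ ∃ v ≠ 0, A *ᵥ v = μ • v := by
  rw [← spectrum_toLin', ← Module.End.hasEigenvalue_iff_mem_spectrum]
  constructor
  · intro h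
    obtain ⟨v, hv⟩ := h.exists_hasEigenvector
    exact ⟨v, hv.2, by simpa using hv.apply_eq_smul⟩
  · rintro ⟨v, hv, hAv⟩
    exact Module.End.hasEigenvalue_of_hasEigenvector ⟨by simpa using hAv, hv⟩

lemma algebraMap_mem_spectrum_map_iff {L : Type*} [Field L] [Algebra K L] (A : Matrix n n K)
    (q : K) : algebraMap K L q ∈ spectrum L (A.map (algebraMap K L)) ↔ q ∈ spectrum K A := by
  rw [mem_spectrum_iff_isRoot_charpoly, mem_spectrum_iff_isRoot_charpoly, charpoly_map,
    Polynomial.isRoot_map_iff (algebraMap K L).injective]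

lemma spectrum_inv_one_add_smul {A : Matrix n n K} {c : K} (hc : c ≠ 0)
    (hA : ∀ q ∈ spectrum K A, 1 + c * q ≠ 0) :
    spectrum K (1 + c • A)⁻¹ = (fun q => (1 + c * q)⁻¹) '' spectrum K A := by
  have hN : spectrum K (1 + c • A) = (fun q => 1 + c * q) '' spectrum K A := by
    rw [← map_one (algebraMap K (Matrix n n K)), ← spectrum.singleton_add_eq,
      show c • A = Units.mk0 c hc • A from rfl, spectrum.unit_smul_eq_smul, Set.singleton_add,
      ← Set.image_smul, Set.image_image]
    rfl
  have hunit : IsUnit (1 + c • A) := by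
    rw [← not_not (a := IsUnit _), ← spectrum.zero_mem_iff K, hN]
    rintro ⟨q, hq, h0⟩
    exact hA q hq h0
  rw [← hunit.unit_spec, ← coe_units_inv, ← spectrum.map_inv, hunit.unit_spec, hN,
    ← Set.image_inv_eq_inv, Set.image_image]

end Field

lemma spectrum_blockDiagonal_const_subset {R m o : Type*} [CommRing R] [Fintype m]
    [DecidableEq m] [Fintype o] [DecidableEq o] (C : Matrix m m R) :
    spectrum R (blockDiagonal fun _ : o => C) ⊆ spectrum R C := by
  intro μ hμ
  contrapose! hμ
  rw [spectrum.notMem_iff] at hμ ⊢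
  have hsub : algebraMap R _ μ - blockDiagonal (fun _ : o => C)
      = blockDiagonalRingHom m o R (fun _ => algebraMap R _ μ - C) := by
    ext ⟨i, k⟩ ⟨j, l⟩
    simp [blockDiagonal_apply, algebraMap_matrix_apply]
    grind
  rw [hsub]
  exact (hμ.map (Pi.constRingHom o _)).map _

lemma blockDiagonal_const_mulVec_comp_fst {α m o : Type*} [NonUnitalNonAssocSemiring α]
    [Fintype m] [Fintype o] [DecidableEq o] (C : Matrix m m α) (w : m → α) :
    (blockDiagonal fun _ : o => C) *ᵥ (w ∘ Prod.fst) = (C *ᵥ w) ∘ Prod.fst := by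
  ext ⟨i, k⟩
  simp [mulVec, dotProduct, Fintype.sum_prod_type, blockDiagonal_apply]

end Matrix

namespace Matrix.IsHermitian

variable {n : Type*} [Fintype n] [DecidableEq n] {M : Matrix n n ℝ}

lemma spectrum_map_algebraMap (hM : M.IsHermitian) :
    spectrum ℂ (M.map (algebraMap ℝ ℂ)) = algebraMap ℝ ℂ '' spectrum ℝ M := by
  ext μ
  constructor
  · intro hμ
    have hMc : (M.map (algebraMap ℝ ℂ)).IsHermitian := hM.map _ fun x => by simp
    obtain ⟨t, rfl⟩ : ∃ t : ℝ, μ = t := by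
      rw [hMc.spectrum_eq_image_range] at hμ
      obtain ⟨_, _, rfl⟩ := hμ
      exact ⟨_, rfl⟩
    exact ⟨t, (algebraMap_mem_spectrum_map_iff M t).mp hμ, rfl⟩
  · rintro ⟨q, hq, rfl⟩
    exact (algebraMap_mem_spectrum_map_iff M q).mpr hq

lemma spectralRadius_map_algebraMap (hM : M.IsHermitian) {r : ℝ} (hr : r ∈ spectrum ℝ M)
    (hle : ∀ q ∈ spectrum ℝ M, |q| ≤ r) :
    spectralRadius ℂ (M.map (algebraMap ℝ ℂ)) = ENNReal.ofReal r := by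
  have hr0 : 0 ≤ r := (abs_nonneg r).trans (hle r hr)
  rw [spectralRadius_eq_of_forall_norm_le (k₀ := algebraMap ℝ ℂ r)]
  · simp [← enorm_eq_nnnorm, Real.enorm_eq_ofReal hr0]
  · rw [hM.spectrum_map_algebraMap]
    exact ⟨r, hr, rfl⟩
  · rw [hM.spectrum_map_algebraMap]
    rintro _ ⟨q, hq, rfl⟩
    simpa [abs_of_nonneg hr0] using hle q hq

end Matrix.IsHermitian

section AvgProj

variable {p b : ℕ}

lemma avgProj_isIdempotentElem : IsIdempotentElem (avgProj p b) := by
  ext ⟨i, k⟩ ⟨j, l⟩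
  have hb : (b : ℝ) ≠ 0 := Nat.cast_ne_zero.mpr (Fin.pos l).ne'
  simp [avgProj, mul_apply, Fintype.sum_prod_type]
  split_ifs <;> simp [hb]

lemma avgProj_isHermitian : (avgProj p b).IsHermitian := by
  ext x y
  simp [avgProj, eq_comm]

lemma commute_blockDiagonal_avgProj (C : Matrix (Fin p) (Fin p) ℝ) :
    Commute (blockDiagonal fun _ : Fin b => C) (avgProj p b) := by
  ext ⟨i, k⟩ ⟨j, l⟩
  simp [mul_apply, Fintype.sum_prod_type, blockDiagonal_apply, avgProj, mul_ite,
    Finset.sum_ite_eq, Finset.sum_ite_eq', mul_comm]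

lemma avgProj_mulVec_comp_fst (hb : b ≠ 0) (w : Fin p → ℝ) :
    avgProj p b *ᵥ (w ∘ Prod.fst) = w ∘ Prod.fst := by
  ext ⟨i, k⟩
  simp [avgProj, mulVec, dotProduct, Fintype.sum_prod_type, hb]

noncomputable def avgSplit (b : ℕ) (C : Matrix (Fin p) (Fin p) ℝ) :
    Matrix (Fin p × Fin b) (Fin p × Fin b) ℝ :=
  (1 - blockDiagonal fun _ => C) * (1 - avgProj p b) + (blockDiagonal fun _ => C) * avgProj p b

lemma admmMs_eq_avgSplit (ρ : ℝ) (D : Matrix (Fin p) (Fin p) ℝ) :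
    admmMs p b ρ D = avgSplit b (1 + ρ⁻¹ • D)⁻¹ := by
  let φ := (blockDiagonalRingHom (Fin p) (Fin b) ℝ).comp (Pi.constRingHom (Fin b) _)
  have hφ : ∀ C, (blockDiagonal fun _ : Fin b => C) = φ C := fun _ => rfl
  simp only [admmMs, avgSplit, hφ, two_smul, map_sub, map_add, map_one]
  noncomm_ring

lemma Matrix.IsHermitian.avgSplit {C : Matrix (Fin p) (Fin p) ℝ} (hC : C.IsHermitian) :
    (avgSplit b C).IsHermitian :=
  IsSelfAdjoint.one_sub_mul_one_sub_add_mul (isHermitian_blockDiagonal_iff.mpr fun _ => hC)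
    avgProj_isHermitian (commute_blockDiagonal_avgProj C)

lemma mem_spectrum_or_one_sub_mem_spectrum_of_mem_spectrum_avgSplit
    {C : Matrix (Fin p) (Fin p) ℝ} {μ : ℝ} (hμ : μ ∈ spectrum ℝ (avgSplit b C)) :
    μ ∈ spectrum ℝ C ∨ 1 - μ ∈ spectrum ℝ C :=
  (avgProj_isIdempotentElem.mem_spectrum_or_one_sub_mem_spectrum
    (commute_blockDiagonal_avgProj C) hμ).imp
    (fun h => spectrum_blockDiagonal_const_subset C h)
    (fun h => spectrum_blockDiagonal_const_subset C h)

lemma spectrum_subset_spectrum_avgSplit (hb : b ≠ 0) (C : Matrix (Fin p) (Fin p) ℝ) :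
    spectrum ℝ C ⊆ spectrum ℝ (avgSplit b C) := by
  intro μ hμ
  obtain ⟨w, hw, hCw⟩ := mem_spectrum_iff_exists_mulVec_eq_smul_s9.mp hμ
  refine mem_spectrum_iff_exists_mulVec_eq_smul_s9.mpr ⟨w ∘ Prod.fst, ?_, ?_⟩
  · obtain ⟨i, hi⟩ := Function.ne_iff.mp hw
    exact Function.ne_iff.mpr ⟨(i, ⟨0, Nat.pos_of_ne_zero hb⟩), hi⟩
  · simp only [avgSplit, add_mulVec, ← mulVec_mulVec, avgProj_mulVec_comp_fst hb, sub_mulVec,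
      one_mulVec, sub_self, mulVec_zero, zero_add, blockDiagonal_const_mulVec_comp_fst, hCw]
    rfl

end AvgProj

lemma abs_inv_one_add_mul_le {c q₀ q : ℝ} (hc : 0 < c) (hq₀ : 0 < q₀) (hq : q₀ ≤ q)
    (hcq : c * q ≤ 1) :
    |(1 + c * q)⁻¹| ≤ (1 + c * q₀)⁻¹ ∧ |1 - (1 + c * q)⁻¹| ≤ (1 + c * q₀)⁻¹ := by
  have hpos : 0 < 1 + c * q := by nlinarith
  have hanti : (1 + c * q)⁻¹ ≤ (1 + c * q₀)⁻¹ := inv_anti₀ (by positivity) (by gcongr)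
  have hle_one : (1 + c * q)⁻¹ ≤ 1 := inv_le_one_of_one_le₀ (by nlinarith)
  have hhalf : 1 ≤ 2 * (1 + c * q)⁻¹ := by
    rw [← div_eq_mul_inv, le_div_iff₀ hpos]
    linarith
  refine ⟨?_, ?_⟩
  · rwa [abs_of_pos (inv_pos.mpr hpos)]
  · rw [abs_of_nonneg (sub_nonneg.mpr hle_one)]
    linarith

theorem spectralRadius_of_Ms {n p b : ℕ} (hb : 2 ≤ b)
    (X : Matrix (Fin n) (Fin p) ℝ) (hX : (Xᵀ * X).PosDef)
    (qlo qhi ρ : ℝ)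
    (hqlo_mem : qlo ∈ spectrum ℝ (Xᵀ * X))
    (hqlo : ∀ x ∈ spectrum ℝ (Xᵀ * X), qlo ≤ x)
    (hqhi : ∀ x ∈ spectrum ℝ (Xᵀ * X), x ≤ qhi)
    (hρ : qhi < ρ) :
    spectralRadius ℂ ((admmMs p b ρ (((b : ℝ))⁻¹ • (Xᵀ * X))).map (algebraMap ℝ ℂ)) =
      ENNReal.ofReal (b * ρ / (b * ρ + qlo)) := by
  set A := Xᵀ * X
  have hqlo_pos : 0 < qlo := by
    obtain ⟨i, rfl⟩ := hX.isHermitian.spectrum_real_eq_range_eigenvalues ▸ hqlo_mem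
    exact hX.eigenvalues_pos i
  have hρ_pos : 0 < ρ := by linarith [hqhi qlo hqlo_mem]
  set c := ((b : ℝ) * ρ)⁻¹
  have hc : 0 < c := by positivity
  have hspec : ∀ q ∈ spectrum ℝ A, qlo ≤ q ∧ c * q ≤ 1 := fun q hq => by
    refine ⟨hqlo q hq, (inv_mul_le_one₀ (by positivity)).mpr ?_⟩
    have hb_one : (1 : ℝ) ≤ b := by exact_mod_cast (by omega : 1 ≤ b)
    nlinarith [hqhi q hq]
  have hσΦ : spectrum ℝ (1 + c • A)⁻¹ = (fun q => (1 + c * q)⁻¹) '' spectrum ℝ A :=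
    spectrum_inv_one_add_smul hc.ne' fun q hq => by
      have := hqlo_pos.trans_le (hspec q hq).1
      positivity
  have hΦ : (1 + ρ⁻¹ • ((b : ℝ)⁻¹ • A))⁻¹ = (1 + c • A)⁻¹ := by
    rw [smul_smul, ← mul_inv, mul_comm ρ]
  have hΦ_herm : (1 + c • A)⁻¹.IsHermitian :=
    (isHermitian_one.add (hX.isHermitian.smul (IsSelfAdjoint.all c))).inv
  have hr : b * ρ / (b * ρ + qlo) = (1 + c * qlo)⁻¹ := by
    simp only [c]
    field_simp
  rw [admmMs_eq_avgSplit, hΦ, hr]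
  refine hΦ_herm.avgSplit.spectralRadius_map_algebraMap
    (spectrum_subset_spectrum_avgSplit (by omega) _ (hσΦ ▸ ⟨qlo, hqlo_mem, rfl⟩)) fun μ hμ => ?_
  have hbound q hq := abs_inv_one_add_mul_le hc hqlo_pos (hspec q hq).1 (hspec q hq).2
  rcases mem_spectrum_or_one_sub_mem_spectrum_of_mem_spectrum_avgSplit hμ with h | h <;>
    rw [hσΦ] at h <;> obtain ⟨q, hq, hqμ⟩ := h
  · exact hqμ ▸ (hbound q hq).1
  · rw [← sub_sub_cancel 1 μ, ← hqμ]
    exact (hbound q hq).2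
end

section
/- Let D₁, D₂ be p×p real symmetric positive definite matrices, ρ > 0 with ρ strictly smaller than the smallest eigenvalue of both D₁ and D₂, and let q̄ be the largest eigenvalue of D₁ + D₂. Let Φᵢ = (I + Dᵢ/ρ)⁻¹. Then for any real eigenvalue λ of the 2-block ADMM mapping matrix, i.e., any λ with unit vector (v₁, v₂) satisfying (1/2)v₁ + (1/2)Φ₂(I − D₂/ρ)v₂ = λv₁ and (1/2)v₂ + (1/2)Φ₁(I − D₁/ρ)v₁ = λv₂, one has λ ≤ q̄/(2ρ + q̄). -/
/-!
Write `Mᵢ = 1 + Dᵢ/ρ` and `Φᵢ = Mᵢ⁻¹`. Then `Φᵢ(1 - Dᵢ/ρ) = 2Φᵢ - 1`, and `Dᵢ ⪰ ρ` gives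
`Mᵢ ⪰ 2`, hence `Φᵢ ⪯ 1/2`. Pairing the two eigen-equations with `v₁`, `v₂` and bounding the
cross terms by `Φᵢ ⪯ 1/2` at `v₁ + v₂` (AM-GM) gives `λ ≤ 1 - ½ ∑ⱼ vⱼᵀ(Φ₁ + Φ₂)vⱼ`.
For the last sum, `vᵀMᵢ⁻¹v ≥ 2wᵀv - wᵀMᵢw` for every `w`; adding the two inequalities and
taking `w = 2v/c`, where `c = 2 + q̄/ρ` bounds the spectrum of `M₁ + M₂`, gives
`Φ₁ + Φ₂ ⪰ 4/c`, so `λ ≤ 1 - 2/c = q̄/(2ρ + q̄)`.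
-/

open Matrix
open scoped MatrixOrder

namespace Matrix

variable {n : Type*}

theorem PosSemidef.posDef_one_add_smul [DecidableEq n] {D : Matrix n n ℝ} (hD : D.PosSemidef)
    {c : ℝ} (hc : 0 ≤ c) : (1 + c • D).PosDef :=
  PosDef.one.add_posSemidef (hD.smul hc)

variable [Fintype n]

theorem IsHermitian.dotProduct_mulVec_comm {A : Matrix n n ℝ} (hA : A.IsHermitian) (x y : n → ℝ) :
    x ⬝ᵥ A *ᵥ y = y ⬝ᵥ A *ᵥ x := by
  rw [dotProduct_mulVec, ← mulVec_transpose, (isHermitian_iff_isSymm.1 hA).eq, dotProduct_comm]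

variable [DecidableEq n]

theorem IsHermitian.dotProduct_mulVec_le_of_spectrum_le {A : Matrix n n ℝ} (hA : A.IsHermitian)
    {c : ℝ} (h : ∀ x ∈ spectrum ℝ A, x ≤ c) (v : n → ℝ) :
    v ⬝ᵥ A *ᵥ v ≤ c * (v ⬝ᵥ v) := by
  have := (le_iff.1 ((le_algebraMap_iff_spectrum_le hA).2 h)).dotProduct_mulVec_nonneg v
  simp only [star_trivial, Algebra.algebraMap_eq_smul_one, sub_mulVec, smul_mulVec, one_mulVec,
    dotProduct_sub, dotProduct_smul, smul_eq_mul, sub_nonneg] at this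
  exact this

theorem IsHermitian.le_dotProduct_mulVec_of_le_spectrum {A : Matrix n n ℝ} (hA : A.IsHermitian)
    {c : ℝ} (h : ∀ x ∈ spectrum ℝ A, c ≤ x) (v : n → ℝ) :
    c * (v ⬝ᵥ v) ≤ v ⬝ᵥ A *ᵥ v := by
  have := (le_iff.1 ((algebraMap_le_iff_le_spectrum hA).2 h)).dotProduct_mulVec_nonneg v
  simp only [star_trivial, Algebra.algebraMap_eq_smul_one, sub_mulVec, smul_mulVec, one_mulVec,
    dotProduct_sub, dotProduct_smul, smul_eq_mul, sub_nonneg] at this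
  exact this

theorem PosDef.two_mul_dotProduct_sub_le_dotProduct_inv_mulVec_s14 {M : Matrix n n ℝ} (hM : M.PosDef)
    (v w : n → ℝ) : 2 * (w ⬝ᵥ v) - w ⬝ᵥ M *ᵥ w ≤ v ⬝ᵥ M⁻¹ *ᵥ v := by
  set u := M⁻¹ *ᵥ v
  have hu : M *ᵥ u = v := by rw [mulVec_mulVec, mul_nonsing_inv _ hM.det_pos.ne'.isUnit, one_mulVec]
  have h := hM.posSemidef.dotProduct_mulVec_nonneg (w - u)
  simp only [star_trivial, mulVec_sub, dotProduct_sub, sub_dotProduct, hu,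
    hM.isHermitian.dotProduct_mulVec_comm u w] at h
  rw [dotProduct_comm u v] at h
  linarith

theorem dotProduct_inv_mulVec_le {M : Matrix n n ℝ} (hM : IsUnit M.det) {c : ℝ} (hc : 0 < c)
    (h : ∀ x, c * (x ⬝ᵥ x) ≤ x ⬝ᵥ M *ᵥ x) (v : n → ℝ) :
    v ⬝ᵥ M⁻¹ *ᵥ v ≤ c⁻¹ * (v ⬝ᵥ v) := by
  set w := M⁻¹ *ᵥ v
  have hw : M *ᵥ w = v := by rw [mulVec_mulVec, mul_nonsing_inv _ hM, one_mulVec]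
  have hMw := h w
  rw [hw, dotProduct_comm w v] at hMw
  have hsq := dotProduct_self_star_nonneg (v - c • w)
  simp only [star_trivial, dotProduct_sub, sub_dotProduct, dotProduct_smul, smul_dotProduct,
    smul_eq_mul, dotProduct_comm w v] at hsq
  rw [le_inv_mul_iff₀ hc]
  nlinarith [mul_le_mul_of_nonneg_left hMw hc.le]

theorem PosDef.four_div_mul_le_dotProduct_inv_add_inv {M₁ M₂ : Matrix n n ℝ} (h₁ : M₁.PosDef)
    (h₂ : M₂.PosDef) {c : ℝ} (hc : 0 < c) {v : n → ℝ}
    (hv : v ⬝ᵥ (M₁ + M₂) *ᵥ v ≤ c * (v ⬝ᵥ v)) :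
    4 / c * (v ⬝ᵥ v) ≤ v ⬝ᵥ (M₁⁻¹ + M₂⁻¹) *ᵥ v := by
  have e₁ := h₁.two_mul_dotProduct_sub_le_dotProduct_inv_mulVec_s14 v ((2 / c) • v)
  have e₂ := h₂.two_mul_dotProduct_sub_le_dotProduct_inv_mulVec_s14 v ((2 / c) • v)
  simp only [add_mulVec, dotProduct_add, mulVec_smul, dotProduct_smul, smul_dotProduct,
    smul_eq_mul] at e₁ e₂ hv ⊢
  set k := 2 / c
  have hk : k * k * (c * (v ⬝ᵥ v)) = 2 * k * (v ⬝ᵥ v) := by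
    linear_combination k * (v ⬝ᵥ v) * div_mul_cancel₀ (2 : ℝ) hc.ne'
  rw [show 4 / c = 2 * k by ring]
  nlinarith [mul_le_mul_of_nonneg_left hv (mul_self_nonneg k)]

theorem nonsing_inv_one_add_mul_one_sub {R : Type*} [CommRing R] {N : Matrix n n R}
    (h : IsUnit (1 + N).det) : (1 + N)⁻¹ * (1 - N) = (2 : R) • (1 + N)⁻¹ - 1 := by
  rw [show 1 - N = (2 : R) • 1 - (1 + N) by rw [two_smul]; abel, Matrix.mul_sub, Matrix.mul_smul,
    mul_one, nonsing_inv_mul _ h]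

theorem dotProduct_one_add_smul_mulVec (c : ℝ) (D : Matrix n n ℝ) (x : n → ℝ) :
    x ⬝ᵥ (1 + c • D) *ᵥ x = x ⬝ᵥ x + c * (x ⬝ᵥ D *ᵥ x) := by
  simp only [add_mulVec, one_mulVec, smul_mulVec, dotProduct_add, dotProduct_smul, smul_eq_mul]

theorem dotProduct_inv_one_add_inv_smul_mulVec_le {D : Matrix n n ℝ} (hD : D.PosDef) {ρ : ℝ}
    (hρ : 0 < ρ) (h : ∀ x ∈ spectrum ℝ D, ρ ≤ x) (x : n → ℝ) :
    x ⬝ᵥ (1 + ρ⁻¹ • D)⁻¹ *ᵥ x ≤ 2⁻¹ * (x ⬝ᵥ x) := by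
  have hM := hD.posSemidef.posDef_one_add_smul (inv_nonneg.2 hρ.le)
  refine dotProduct_inv_mulVec_le hM.det_pos.ne'.isUnit two_pos (fun y => ?_) x
  have hy := mul_le_mul_of_nonneg_left (hD.isHermitian.le_dotProduct_mulVec_of_le_spectrum h y)
    (inv_nonneg.2 hρ.le)
  rw [inv_mul_cancel_left₀ hρ.ne'] at hy
  rw [dotProduct_one_add_smul_mulVec]
  linarith

theorem halfBlock_eigenvalue_le {Φ₁ Φ₂ : Matrix n n ℝ} (h₁ : Φ₁.IsHermitian)
    (h₂ : Φ₂.IsHermitian) (hΦ₁ : ∀ x, x ⬝ᵥ Φ₁ *ᵥ x ≤ 2⁻¹ * (x ⬝ᵥ x))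
    (hΦ₂ : ∀ x, x ⬝ᵥ Φ₂ *ᵥ x ≤ 2⁻¹ * (x ⬝ᵥ x)) {lam : ℝ} {v₁ v₂ : n → ℝ}
    (hunit : v₁ ⬝ᵥ v₁ + v₂ ⬝ᵥ v₂ = 1)
    (heq₁ : (1/2 : ℝ) • v₁ + (1/2 : ℝ) • (((2 : ℝ) • Φ₂ - 1) *ᵥ v₂) = lam • v₁)
    (heq₂ : (1/2 : ℝ) • v₂ + (1/2 : ℝ) • (((2 : ℝ) • Φ₁ - 1) *ᵥ v₁) = lam • v₂) :
    lam ≤ 1 - 2⁻¹ * (v₁ ⬝ᵥ (Φ₁ + Φ₂) *ᵥ v₁ + v₂ ⬝ᵥ (Φ₁ + Φ₂) *ᵥ v₂) := by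
  have e₁ := congrArg (v₁ ⬝ᵥ ·) heq₁
  have e₂ := congrArg (v₂ ⬝ᵥ ·) heq₂
  have c₁ := hΦ₁ (v₁ + v₂)
  have c₂ := hΦ₂ (v₁ + v₂)
  simp only [dotProduct_add, add_dotProduct, mulVec_add, add_mulVec, sub_mulVec, smul_mulVec,
    one_mulVec, dotProduct_sub, dotProduct_smul, smul_eq_mul] at e₁ e₂ c₁ c₂ ⊢
  simp only [h₁.dotProduct_mulVec_comm v₂ v₁, h₂.dotProduct_mulVec_comm v₂ v₁,
    dotProduct_comm v₂ v₁] at e₂ c₁ c₂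
  have hlam : lam = lam * (v₁ ⬝ᵥ v₁) + lam * (v₂ ⬝ᵥ v₂) := by rw [← mul_add, hunit, mul_one]
  linarith

end Matrix

theorem two_block_admm_eigenvalue_bound {p : ℕ}
    (D₁ D₂ : Matrix (Fin p) (Fin p) ℝ) (hD₁ : D₁.PosDef) (hD₂ : D₂.PosDef)
    (ρ : ℝ) (hρ : 0 < ρ)
    (hρ₁ : ∀ x ∈ spectrum ℝ D₁, ρ < x) (hρ₂ : ∀ x ∈ spectrum ℝ D₂, ρ < x)
    (qhi : ℝ) (hqhi_mem : qhi ∈ spectrum ℝ (D₁ + D₂))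
    (hqhi : ∀ x ∈ spectrum ℝ (D₁ + D₂), x ≤ qhi)
    (lam : ℝ) (v₁ v₂ : Fin p → ℝ)
    (hunit : v₁ ⬝ᵥ v₁ + v₂ ⬝ᵥ v₂ = 1)
    (heq₁ : (1/2 : ℝ) • v₁ + (1/2 : ℝ) • ((1 + ρ⁻¹ • D₂)⁻¹ *ᵥ ((1 - ρ⁻¹ • D₂) *ᵥ v₂)) = lam • v₁)
    (heq₂ : (1/2 : ℝ) • v₂ + (1/2 : ℝ) • ((1 + ρ⁻¹ • D₁)⁻¹ *ᵥ ((1 - ρ⁻¹ • D₁) *ᵥ v₁)) = lam • v₂) :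
    lam ≤ qhi / (2 * ρ + qhi) := by
  have hM₁ := hD₁.posSemidef.posDef_one_add_smul (inv_nonneg.2 hρ.le)
  have hM₂ := hD₂.posSemidef.posDef_one_add_smul (inv_nonneg.2 hρ.le)
  rw [mulVec_mulVec, nonsing_inv_one_add_mul_one_sub hM₂.det_pos.ne'.isUnit] at heq₁
  rw [mulVec_mulVec, nonsing_inv_one_add_mul_one_sub hM₁.det_pos.ne'.isUnit] at heq₂
  have hlam := halfBlock_eigenvalue_le hM₁.isHermitian.inv hM₂.isHermitian.inv
    (dotProduct_inv_one_add_inv_smul_mulVec_le hD₁ hρ fun x hx => (hρ₁ x hx).le)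
    (dotProduct_inv_one_add_inv_smul_mulVec_le hD₂ hρ fun x hx => (hρ₂ x hx).le) hunit heq₁ heq₂
  have hq : 0 ≤ qhi := (posSemidef_iff_isHermitian_and_spectrum_nonneg.1
    (hD₁.posSemidef.add hD₂.posSemidef)).2 hqhi_mem
  have hc : 0 < 2 + ρ⁻¹ * qhi := by positivity
  have hΦ : ∀ x, 4 / (2 + ρ⁻¹ * qhi) * (x ⬝ᵥ x) ≤
      x ⬝ᵥ ((1 + ρ⁻¹ • D₁)⁻¹ + (1 + ρ⁻¹ • D₂)⁻¹) *ᵥ x := fun x =>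
    hM₁.four_div_mul_le_dotProduct_inv_add_inv hM₂ hc (by
      have := (hD₁.isHermitian.add hD₂.isHermitian).dotProduct_mulVec_le_of_spectrum_le hqhi x
      rw [add_mulVec, dotProduct_add] at this ⊢
      rw [dotProduct_one_add_smul_mulVec, dotProduct_one_add_smul_mulVec]
      linarith [mul_le_mul_of_nonneg_left this (inv_nonneg.2 hρ.le)])
  have hsum : 4 / (2 + ρ⁻¹ * qhi) * (v₁ ⬝ᵥ v₁) + 4 / (2 + ρ⁻¹ * qhi) * (v₂ ⬝ᵥ v₂) =
      4 / (2 + ρ⁻¹ * qhi) := by rw [← mul_add, hunit, mul_one]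
  calc lam ≤ 1 - 2⁻¹ * (4 / (2 + ρ⁻¹ * qhi)) := by linarith [hΦ v₁, hΦ v₂]
    _ = qhi / (2 * ρ + qhi) := by field_simp; ring
end

section
/- Let D₁, …, D_b be p×p real symmetric positive definite matrices, ρ > 0 with ρ < q₁ where q₁ is the minimum over i of the smallest eigenvalue of Dᵢ, and let q̄ be the largest eigenvalue of ∑ᵢDᵢ. Let Φᵢ = (I + Dᵢ/ρ)⁻¹ and let Φ be the block-diagonal matrix of the Φᵢ, P = (1/b)(J_b ⊗ I_p), and M̂ = I − Φ + ΦP + PΦ − P. Then the spectral radius of M̂ is at most q̄/(ρ + q̄). -/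
open Matrix

open Pointwise

namespace ADMMAux

variable {n : Type*} [Fintype n] [DecidableEq n]

lemma psd_smul' {A : Matrix n n ℝ} (hA : A.PosSemidef) {c : ℝ} (hc : 0 ≤ c) :
    (c • A).PosSemidef := by
  refine PosSemidef.of_dotProduct_mulVec_nonneg ?_ fun x => ?_
  · unfold Matrix.IsHermitian
    rw [conjTranspose_smul, hA.1.eq]
    simp
  · rw [smul_mulVec, dotProduct_smul]
    exact mul_nonneg hc (hA.dotProduct_mulVec_nonneg x)

lemma psd_sum {ι : Type*} (s : Finset ι) (f : ι → Matrix n n ℝ)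
    (h : ∀ i ∈ s, (f i).PosSemidef) : (∑ i ∈ s, f i).PosSemidef := by
  classical
  induction s using Finset.induction_on with
  | empty => simpa using (Matrix.PosSemidef.zero (n := n) (R := ℝ))
  | insert _ _ hx ih =>
      rw [Finset.sum_insert hx]
      exact (h _ (Finset.mem_insert_self _ _)).add
        (ih fun i hi => h i (Finset.mem_insert_of_mem hi))

lemma spectrum_nonneg_of_psd {H : Matrix n n ℝ} (hH : H.PosSemidef) :
    ∀ x ∈ spectrum ℝ H, 0 ≤ x := by
  intro x hx
  rw [hH.1.spectrum_real_eq_range_eigenvalues] at hx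
  obtain ⟨i, rfl⟩ := hx
  exact hH.eigenvalues_nonneg i

lemma spec_shift {H : Matrix n n ℝ} (μ : ℝ) :
    spectrum ℝ (H - μ • 1) = spectrum ℝ H - ({μ} : Set ℝ) := by
  rw [show H - μ • (1 : Matrix n n ℝ) = H - algebraMap ℝ (Matrix n n ℝ) μ by
        rw [Algebra.algebraMap_eq_smul_one], ← spectrum.sub_singleton_eq]

lemma psd_sub_smul_one {H : Matrix n n ℝ} (hH : H.IsHermitian) {μ : ℝ}
    (h : ∀ x ∈ spectrum ℝ H, μ ≤ x) : (H - μ • 1).PosSemidef := by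
  have hher : (H - μ • 1).IsHermitian := by
    refine hH.sub ?_
    unfold Matrix.IsHermitian
    rw [conjTranspose_smul, conjTranspose_one]
    simp
  apply hher.posSemidef_iff_eigenvalues_nonneg.mpr
  intro i
  have hmem := hher.eigenvalues_mem_spectrum_real (𝕜 := ℝ) i
  rw [spec_shift] at hmem
  obtain ⟨x, hx, y, hy, hxy⟩ := Set.mem_sub.mp hmem
  rw [Set.mem_singleton_iff] at hy
  subst hy
  rw [← hxy]
  simpa using h x hx

lemma spectrum_ge_of_psd {H : Matrix n n ℝ} {μ : ℝ} (h : (H - μ • 1).PosSemidef) :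
    ∀ x ∈ spectrum ℝ H, μ ≤ x := by
  intro x hx
  have hmem : x - μ ∈ spectrum ℝ (H - μ • 1) := by
    rw [spec_shift]
    exact ⟨x, hx, μ, rfl, rfl⟩
  have := spectrum_nonneg_of_psd h _ hmem
  linarith

lemma spectrum_le_of_psd {H : Matrix n n ℝ} {β : ℝ} (h : (β • 1 - H).PosSemidef) :
    ∀ x ∈ spectrum ℝ H, x ≤ β := by
  intro x hx
  have hspec : spectrum ℝ (β • (1 : Matrix n n ℝ) - H) = ({β} : Set ℝ) - spectrum ℝ H := by
    rw [show β • (1 : Matrix n n ℝ) - H = algebraMap ℝ (Matrix n n ℝ) β - H by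
          rw [Algebra.algebraMap_eq_smul_one], ← spectrum.singleton_sub_eq]
  have hmem : β - x ∈ spectrum ℝ (β • (1 : Matrix n n ℝ) - H) := by
    rw [hspec]
    exact ⟨β, rfl, x, hx, rfl⟩
  have := spectrum_nonneg_of_psd h _ hmem
  linarith

lemma psd_smul_one_sub {H : Matrix n n ℝ} (hH : H.IsHermitian) {β : ℝ}
    (h : ∀ x ∈ spectrum ℝ H, x ≤ β) : (β • 1 - H).PosSemidef := by
  have hher : (β • (1 : Matrix n n ℝ) - H).IsHermitian := by
    refine IsHermitian.sub ?_ hH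
    unfold Matrix.IsHermitian
    rw [conjTranspose_smul, conjTranspose_one]
    simp
  apply hher.posSemidef_iff_eigenvalues_nonneg.mpr
  intro i
  have hmem := hher.eigenvalues_mem_spectrum_real (𝕜 := ℝ) i
  have hspec : spectrum ℝ (β • (1 : Matrix n n ℝ) - H) = ({β} : Set ℝ) - spectrum ℝ H := by
    rw [show β • (1 : Matrix n n ℝ) - H = algebraMap ℝ (Matrix n n ℝ) β - H by
          rw [Algebra.algebraMap_eq_smul_one], ← spectrum.singleton_sub_eq]
  rw [hspec] at hmem
  obtain ⟨x, hx, y, hy, hxy⟩ := Set.mem_sub.mp hmem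
  rw [Set.mem_singleton_iff] at hx
  subst hx
  rw [← hxy]
  simpa using h y hy

section Inv

variable {A : Matrix n n ℝ}

open scoped MatrixOrder

lemma inv_bounds_aux (hA : A.PosDef) :
    A⁻¹ * CFC.sqrt A * A * (CFC.sqrt A * A⁻¹) = 1 ∧
    A⁻¹ * CFC.sqrt A * (CFC.sqrt A * A⁻¹) = A⁻¹ := by
  set S := CFC.sqrt A with hSdef
  have hS : S * S = A := CFC.sqrt_mul_sqrt_self A hA.posSemidef.nonneg
  have hdet : IsUnit A.det := hA.det_pos.ne'.isUnit
  have hl : A⁻¹ * A = 1 := nonsing_inv_mul A hdet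
  have hr : A * A⁻¹ = 1 := mul_nonsing_inv A hdet
  have hSAS : S * A * S = A * A := by
    rw [← hS]; simp only [Matrix.mul_assoc]
  constructor
  · calc A⁻¹ * S * A * (S * A⁻¹) = A⁻¹ * (S * A * S) * A⁻¹ := by
          simp only [Matrix.mul_assoc]
      _ = A⁻¹ * (A * A) * A⁻¹ := by rw [hSAS]
      _ = (A⁻¹ * A) * (A * A⁻¹) := by simp only [Matrix.mul_assoc]
      _ = 1 := by rw [hl, hr, one_mul]
  · calc A⁻¹ * S * (S * A⁻¹) = A⁻¹ * (S * S) * A⁻¹ := by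
          simp only [Matrix.mul_assoc]
      _ = A⁻¹ * (A * A⁻¹) := by rw [hS, Matrix.mul_assoc]
      _ = A⁻¹ := by rw [hr, mul_one]

lemma inv_le_smul_one (hA : A.PosDef) {μ : ℝ} (hμ : 0 < μ)
    (h : (A - μ • 1).PosSemidef) : (μ⁻¹ • 1 - A⁻¹).PosSemidef := by
  set S := CFC.sqrt A with hSdef
  have hSh : S.IsHermitian := (CFC.sqrt_nonneg A).posSemidef.1
  have hAinvh : (A⁻¹).IsHermitian := hA.isHermitian.inv
  obtain ⟨t1, t2⟩ := inv_bounds_aux hA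
  have key : μ⁻¹ • (1 : Matrix n n ℝ) - A⁻¹ =
      (S * A⁻¹)ᴴ * (μ⁻¹ • (A - μ • 1)) * (S * A⁻¹) := by
    rw [conjTranspose_mul, hSh.eq, hAinvh.eq]
    have h1 : μ⁻¹ • (A - μ • (1 : Matrix n n ℝ)) = μ⁻¹ • A - 1 := by
      rw [smul_sub, smul_smul, inv_mul_cancel₀ hμ.ne', one_smul]
    rw [h1]
    simp only [mul_sub, sub_mul, mul_one, mul_smul_comm, smul_mul_assoc]
    rw [t1, t2]
  rw [key]
  exact (psd_smul' h (inv_nonneg.mpr hμ.le)).conjTranspose_mul_mul_same _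

lemma smul_one_le_inv (hA : A.PosDef) {β : ℝ} (hβ : 0 < β)
    (h : (β • 1 - A).PosSemidef) : (A⁻¹ - β⁻¹ • 1).PosSemidef := by
  set S := CFC.sqrt A with hSdef
  have hSh : S.IsHermitian := (CFC.sqrt_nonneg A).posSemidef.1
  have hAinvh : (A⁻¹).IsHermitian := hA.isHermitian.inv
  obtain ⟨t1, t2⟩ := inv_bounds_aux hA
  have key : A⁻¹ - β⁻¹ • (1 : Matrix n n ℝ) =
      (S * A⁻¹)ᴴ * (β⁻¹ • (β • 1 - A)) * (S * A⁻¹) := by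
    rw [conjTranspose_mul, hSh.eq, hAinvh.eq]
    have h1 : β⁻¹ • (β • (1 : Matrix n n ℝ) - A) = 1 - β⁻¹ • A := by
      rw [smul_sub, smul_smul, inv_mul_cancel₀ hβ.ne', one_smul]
    rw [h1]
    simp only [mul_sub, sub_mul, mul_one, mul_smul_comm, smul_mul_assoc]
    rw [t1, t2]
  rw [key]
  exact (psd_smul' h (inv_nonneg.mpr hβ.le)).conjTranspose_mul_mul_same _

end Inv

lemma psd_blockDiagonal {b : Type*} [Fintype b] [DecidableEq b]
    {f : b → Matrix n n ℝ} (h : ∀ i, (f i).PosSemidef) :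
    (blockDiagonal f).PosSemidef := by
  refine PosSemidef.of_dotProduct_mulVec_nonneg ?_ fun x => ?_
  · unfold Matrix.IsHermitian
    rw [blockDiagonal_conjTranspose]
    exact congrArg _ (funext fun i => (h i).1.eq)
  · have hq : star x ⬝ᵥ (blockDiagonal f *ᵥ x) =
        ∑ i, (fun a => x (a, i)) ⬝ᵥ (f i *ᵥ (fun a => x (a, i))) := by
      simp only [dotProduct, mulVec, blockDiagonal_apply, Fintype.sum_prod_type,
        ite_mul, zero_mul, Finset.sum_ite_eq, Finset.mem_univ, if_true, star_trivial]
      rw [Finset.sum_comm]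
    rw [hq]
    exact Finset.sum_nonneg fun i _ => by
      simpa using (h i).dotProduct_mulVec_nonneg (fun a => x (a, i))

lemma blockDiagonal_sub' {o : Type*} [Fintype o] [DecidableEq o]
    (f g : o → Matrix n n ℝ) :
    blockDiagonal (fun i => f i - g i) = blockDiagonal f - blockDiagonal g :=
  blockDiagonal_sub f g

lemma blockDiagonal_const_smul_one {o : Type*} [Fintype o] [DecidableEq o] (c : ℝ) :
    blockDiagonal (fun _ : o => c • (1 : Matrix n n ℝ)) =
      c • (1 : Matrix (n × o) (n × o) ℝ) := by
  have h := blockDiagonal_smul (o := o) c (1 : o → Matrix n n ℝ)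
  rw [blockDiagonal_one] at h
  exact h

lemma avgProj_conjTranspose (p b : ℕ) : (avgProj p b)ᴴ = avgProj p b := by
  ext x y
  simp [avgProj, conjTranspose_apply, eq_comm]

lemma avgProj_mul_self {p b : ℕ} (hb : 0 < b) : avgProj p b * avgProj p b = avgProj p b := by
  have hbne : (b : ℝ) ≠ 0 := (Nat.cast_pos.mpr hb).ne'
  ext x z
  rcases eq_or_ne x.1 z.1 with h | h <;>
    simp [avgProj, mul_apply, Fintype.sum_prod_type, h, ite_mul, zero_mul, mul_ite, mul_zero,
      Finset.sum_ite_eq', Finset.sum_ite_eq, Finset.sum_const, Finset.card_univ,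
      Fintype.card_fin, nsmul_eq_mul] <;> field_simp

variable {N : Type*} [Fintype N] [DecidableEq N]

lemma M_decomp {Φ P : Matrix N N ℝ} (hPP : P * P = P) :
    1 - Φ + Φ * P + P * Φ - P =
      (1 - P) * (1 - Φ) * (1 - P) + P * Φ * P := by
  have h : (1 - P) * (1 - Φ) * (1 - P) + P * Φ * P -
      (1 - Φ + Φ * P + P * Φ - P) = P * P - P := by noncomm_ring
  rw [hPP, sub_self, sub_eq_zero] at h
  exact h.symm

lemma cM_decomp {Φ P : Matrix N N ℝ} (hPP : P * P = P) (c : ℝ) :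
    c • (1 : Matrix N N ℝ) - (1 - Φ + Φ * P + P * Φ - P) =
      (1 - P) * ((c - 1) • (1 : Matrix N N ℝ) + Φ) * (1 - P) + P * (c • 1 - Φ) * P := by
  simp only [mul_sub, sub_mul, mul_add, add_mul, one_mul, mul_one, smul_mul_assoc,
    mul_smul_comm, hPP, sub_smul, one_smul, smul_add, smul_sub, smul_zero]
  abel

end ADMMAux


open ADMMAux

theorem symmetrized_admm_spectral_radius_bound {p b : ℕ}
    (D : Fin b → Matrix (Fin p) (Fin p) ℝ) (hD : ∀ i, (D i).PosDef)
    (ρ : ℝ) (hρ : 0 < ρ)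
    (hsmall : ∀ i, ∀ x ∈ spectrum ℝ (D i), ρ < x)
    (qhi : ℝ) (hqhi : ∀ x ∈ spectrum ℝ (∑ i, D i), x ≤ qhi) :
    spectralRadius ℂ
        ((let Φ : Matrix (Fin p × Fin b) (Fin p × Fin b) ℝ :=
            Matrix.blockDiagonal (fun i => (1 + ρ⁻¹ • D i)⁻¹);
          (1 : Matrix (Fin p × Fin b) (Fin p × Fin b) ℝ) - Φ + Φ * avgProj p b +
            avgProj p b * Φ - avgProj p b).map (algebraMap ℝ ℂ)) ≤
      ENNReal.ofReal (qhi / (ρ + qhi)) := by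
  classical
  set Φ : Matrix (Fin p × Fin b) (Fin p × Fin b) ℝ :=
    Matrix.blockDiagonal (fun i => (1 + ρ⁻¹ • D i)⁻¹) with hΦdef
  set P : Matrix (Fin p × Fin b) (Fin p × Fin b) ℝ := avgProj p b with hPdef
  set M : Matrix (Fin p × Fin b) (Fin p × Fin b) ℝ := 1 - Φ + Φ * P + P * Φ - P with hMdef
  show spectralRadius ℂ (M.map (algebraMap ℝ ℂ)) ≤ ENNReal.ofReal (qhi / (ρ + qhi))
  rw [spectralRadius]
  refine iSup₂_le fun k hk => ?_
  -- degenerate cases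
  rcases Nat.eq_zero_or_pos p with hp | hp
  · subst hp
    haveI : IsEmpty (Fin 0 × Fin b) := ⟨fun x => x.1.elim0⟩
    rw [spectrum.mem_iff] at hk
    exact absurd (isUnit_of_subsingleton _) hk
  rcases Nat.eq_zero_or_pos b with hb | hb
  · subst hb
    haveI : IsEmpty (Fin p × Fin 0) := ⟨fun x => x.2.elim0⟩
    rw [spectrum.mem_iff] at hk
    exact absurd (isUnit_of_subsingleton _) hk
  -- basic scalar facts
  set c : ℝ := qhi / (ρ + qhi) with hcdef
  -- each D i is dominated by the sum
  have hrest : ∀ i, (∑ j, D j - D i).PosSemidef := by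
    intro i
    have he : ∑ j, D j - D i = ∑ j ∈ Finset.univ.erase i, D j := by
      rw [Finset.sum_erase_eq_sub (Finset.mem_univ i)]
    rw [he]
    exact psd_sum _ _ fun j _ => (hD j).posSemidef
  have hDge : ∀ i, (D i - ρ • 1).PosSemidef := fun i =>
    psd_sub_smul_one (hD i).isHermitian fun x hx => (hsmall i x hx).le
  have hsum_herm : (∑ i, D i).IsHermitian := by
    unfold Matrix.IsHermitian
    rw [conjTranspose_sum]
    exact Finset.sum_congr rfl fun i _ => (hD i).isHermitian.eq
  have hsum_ub : (qhi • 1 - ∑ i, D i).PosSemidef := psd_smul_one_sub hsum_herm hqhi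
  have hDub : ∀ i, (qhi • 1 - D i).PosSemidef := by
    intro i
    have := hsum_ub.add (hrest i)
    rwa [sub_add_sub_cancel] at this
  -- ρ ≤ qhi
  have hρq : ρ ≤ qhi := by
    set i0 : Fin b := ⟨0, hb⟩
    set j0 : Fin p := ⟨0, hp⟩
    have hsum_ge : (∑ j, D j - ρ • 1).PosSemidef := by
      have he : ∑ j, D j - ρ • 1 = (D i0 - ρ • 1) + (∑ j, D j - D i0) := by abel
      rw [he]
      exact (hDge i0).add (hrest i0)
    have hmem := hsum_herm.eigenvalues_mem_spectrum_real (𝕜 := ℝ) j0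
    exact le_trans (spectrum_ge_of_psd hsum_ge _ hmem) (hqhi _ hmem)
  have hρqpos : 0 < ρ + qhi := by linarith
  have hcpos : 0 < c := div_pos (by linarith) hρqpos
  have hc1 : c ≤ 1 := by rw [div_le_one hρqpos]; linarith
  have hchalf : 2⁻¹ ≤ c := by
    rw [hcdef, le_div_iff₀ hρqpos]; nlinarith
  -- per-block facts
  set β : ℝ := (ρ + qhi) / ρ with hβdef
  have hβpos : 0 < β := div_pos hρqpos hρ
  have hβinv : β⁻¹ = 1 - c := by
    rw [hβdef, hcdef]
    field_simp
    ring
  have hblock : ∀ i : Fin b,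
      ((1 + ρ⁻¹ • D i)⁻¹).PosSemidef ∧
      (c • 1 - (1 + ρ⁻¹ • D i)⁻¹).PosSemidef ∧
      ((1 + ρ⁻¹ • D i)⁻¹ - (1 - c) • 1).PosSemidef ∧
      ((1 : Matrix (Fin p) (Fin p) ℝ) - (1 + ρ⁻¹ • D i)⁻¹).PosSemidef := by
    intro i
    set A : Matrix (Fin p) (Fin p) ℝ := 1 + ρ⁻¹ • D i with hAdef
    have hApos : A.PosDef :=
      Matrix.PosDef.add_posSemidef Matrix.PosDef.one
        (psd_smul' (hD i).posSemidef (inv_nonneg.mpr hρ.le))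
    have hAge : (A - (2 : ℝ) • 1).PosSemidef := by
      have he : A - (2 : ℝ) • (1 : Matrix (Fin p) (Fin p) ℝ) = ρ⁻¹ • (D i - ρ • 1) := by
        rw [smul_sub, smul_smul, inv_mul_cancel₀ hρ.ne', hAdef, two_smul, one_smul]
        abel
      rw [he]
      exact psd_smul' (hDge i) (inv_nonneg.mpr hρ.le)
    have hAub : (β • 1 - A).PosSemidef := by
      have hco : ρ⁻¹ * qhi = β - 1 := by
        rw [hβdef]; field_simp
        ring
      have he : β • (1 : Matrix (Fin p) (Fin p) ℝ) - A = ρ⁻¹ • (qhi • 1 - D i) := by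
        rw [smul_sub, smul_smul, hco, hAdef, sub_smul, one_smul]
        abel
      rw [he]
      exact psd_smul' (hDub i) (inv_nonneg.mpr hρ.le)
    have hhalf : ((2 : ℝ)⁻¹ • 1 - A⁻¹).PosSemidef := inv_le_smul_one hApos two_pos hAge
    have hlow : (A⁻¹ - (1 - c) • 1).PosSemidef := by
      have := smul_one_le_inv hApos hβpos hAub
      rwa [hβinv] at this
    have hcub : (c • 1 - A⁻¹).PosSemidef := by
      have he : c • (1 : Matrix (Fin p) (Fin p) ℝ) - A⁻¹ =
          (c - 2⁻¹) • 1 + ((2 : ℝ)⁻¹ • 1 - A⁻¹) := by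
        rw [sub_smul]; abel
      rw [he]
      exact (psd_smul' Matrix.PosSemidef.one (by linarith)).add hhalf
    have h1ub : ((1 : Matrix (Fin p) (Fin p) ℝ) - A⁻¹).PosSemidef := by
      have he : (1 : Matrix (Fin p) (Fin p) ℝ) - A⁻¹ =
          (1 - c) • 1 + (c • 1 - A⁻¹) := by
        rw [sub_smul, one_smul]; abel
      rw [he]
      exact (psd_smul' Matrix.PosSemidef.one (by linarith)).add hcub
    exact ⟨hApos.posSemidef.inv, hcub, hlow, h1ub⟩
  -- block-level facts
  have hΦpsd : Φ.PosSemidef := psd_blockDiagonal fun i => (hblock i).1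
  have h1Φ : ((1 : Matrix (Fin p × Fin b) (Fin p × Fin b) ℝ) - Φ).PosSemidef := by
    have he : (1 : Matrix (Fin p × Fin b) (Fin p × Fin b) ℝ) - Φ =
        Matrix.blockDiagonal (fun i => (1 : Matrix (Fin p) (Fin p) ℝ) - (1 + ρ⁻¹ • D i)⁻¹) := by
      rw [hΦdef, blockDiagonal_sub',
        show Matrix.blockDiagonal (fun _ : Fin b => (1 : Matrix (Fin p) (Fin p) ℝ)) = 1 from
          blockDiagonal_one]
    rw [he]
    exact psd_blockDiagonal fun i => (hblock i).2.2.2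
  have hcΦ : (c • (1 : Matrix (Fin p × Fin b) (Fin p × Fin b) ℝ) - Φ).PosSemidef := by
    have he : c • (1 : Matrix (Fin p × Fin b) (Fin p × Fin b) ℝ) - Φ =
        Matrix.blockDiagonal (fun i => c • (1 : Matrix (Fin p) (Fin p) ℝ) - (1 + ρ⁻¹ • D i)⁻¹) := by
      rw [hΦdef, blockDiagonal_sub', blockDiagonal_const_smul_one]
    rw [he]
    exact psd_blockDiagonal fun i => (hblock i).2.1
  have hΦc : ((c - 1) • (1 : Matrix (Fin p × Fin b) (Fin p × Fin b) ℝ) + Φ).PosSemidef := by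
    have he : (c - 1) • (1 : Matrix (Fin p × Fin b) (Fin p × Fin b) ℝ) + Φ =
        Matrix.blockDiagonal
          (fun i => (1 + ρ⁻¹ • D i)⁻¹ - (1 - c) • (1 : Matrix (Fin p) (Fin p) ℝ)) := by
      rw [hΦdef, blockDiagonal_sub', blockDiagonal_const_smul_one]
      rw [sub_smul, one_smul, sub_smul, one_smul]
      abel
    rw [he]
    exact psd_blockDiagonal fun i => (hblock i).2.2.1
  -- P facts
  have hPP : P * P = P := avgProj_mul_self hb
  have hPH : Pᴴ = P := avgProj_conjTranspose p b
  have h1PH : ((1 : Matrix (Fin p × Fin b) (Fin p × Fin b) ℝ) - P)ᴴ = 1 - P := by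
    rw [conjTranspose_sub, conjTranspose_one, hPH]
  -- M is PSD
  have hMpsd : M.PosSemidef := by
    rw [hMdef, M_decomp hPP]
    refine Matrix.PosSemidef.add ?_ ?_
    · have := h1Φ.conjTranspose_mul_mul_same (1 - P)
      rwa [h1PH] at this
    · have := hΦpsd.conjTranspose_mul_mul_same P
      rwa [hPH] at this
  -- c • 1 - M is PSD
  have hcM : (c • (1 : Matrix (Fin p × Fin b) (Fin p × Fin b) ℝ) - M).PosSemidef := by
    rw [hMdef, cM_decomp hPP c]
    refine Matrix.PosSemidef.add ?_ ?_
    · have := hΦc.conjTranspose_mul_mul_same (1 - P)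
      rwa [h1PH] at this
    · have := hcΦ.conjTranspose_mul_mul_same P
      rwa [hPH] at this
  -- the complexified matrix is Hermitian
  have hAherm : ((M.map (algebraMap ℝ ℂ))).IsHermitian := by
    unfold Matrix.IsHermitian
    rw [← Matrix.conjTranspose_map (⇑(algebraMap ℝ ℂ)) (fun a => by simp), hMpsd.1.eq]
  -- identify k with a real eigenvalue
  rw [hAherm.spectral_theorem, Unitary.conjStarAlgAut_apply, Unitary.spectrum_star_right_conjugate, spectrum_diagonal] at hk
  obtain ⟨i, hi⟩ := hk
  set t : ℝ := hAherm.eigenvalues i with htdef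
  have hkt : k = (t : ℂ) := by
    rw [← hi]; rfl
  -- t is in the real spectrum of M
  have htM : t ∈ spectrum ℝ M := by
    have h1 : t ∈ spectrum ℝ (M.map (algebraMap ℝ ℂ)) :=
      hAherm.eigenvalues_mem_spectrum_real (𝕜 := ℂ) i
    have h2 := AlgHom.spectrum_apply_subset
      (AlgHom.mapMatrix (m := Fin p × Fin b) (Algebra.ofId ℝ ℂ)) M
    apply h2
    rwa [show (AlgHom.mapMatrix (m := Fin p × Fin b) (Algebra.ofId ℝ ℂ)) M
        = M.map (algebraMap ℝ ℂ) from rfl]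
  -- bounds on t
  have ht0 : 0 ≤ t := spectrum_nonneg_of_psd hMpsd t htM
  have htc : t ≤ c := spectrum_le_of_psd hcM t htM
  -- conclude
  rw [hkt, ← enorm_eq_nnnorm, ← ofReal_norm, Complex.norm_real, Real.norm_eq_abs,
    abs_of_nonneg ht0]
  exact ENNReal.ofReal_le_ofReal htc
end

section
/- Let b ≥ 2, 0 < q̲ ≤ q̄ and ρ > 0 with ρ > s₂ := (2b − q̄q̲ + √(4b² + (q̄q̲)²))/(2bq̄). Then bρ/(bρ + q̲) < ρq̄ − 1. -/
theorem admm_beats_gd_large_step (b : ℕ) (hb : 2 ≤ b) (qlo qhi ρ : ℝ)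
    (h0 : 0 < qlo) (h1 : qlo ≤ qhi)
    (hρ : (2 * b - qhi * qlo + Real.sqrt (4 * b^2 + (qhi * qlo)^2)) / (2 * b * qhi) < ρ) :
    b * ρ / (b * ρ + qlo) < ρ * qhi - 1 := by
  have hB : (2:ℝ) ≤ (b:ℝ) := by exact_mod_cast hb
  have hB0 : (0:ℝ) < (b:ℝ) := by linarith
  have hq : 0 < qhi := lt_of_lt_of_le h0 h1
  set P : ℝ := qhi * qlo with hP
  have hP0 : 0 < P := mul_pos hq h0
  set s : ℝ := Real.sqrt (4 * (b:ℝ)^2 + P^2) with hs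
  have hsnn : 0 ≤ s := Real.sqrt_nonneg _
  have hs2 : s^2 = 4 * (b:ℝ)^2 + P^2 := Real.sq_sqrt (by positivity)
  have hs0 : 0 < s := by nlinarith
  have hnum : 0 < 2 * (b:ℝ) - P + s := by nlinarith
  have hden2 : 0 < 2 * (b:ℝ) * qhi := by positivity
  have hρ' : 2 * (b:ℝ) - P + s < 2 * (b:ℝ) * qhi * ρ := by
    have := (div_lt_iff₀ hden2).mp hρ
    linarith
  have hρ0 : 0 < ρ := by nlinarith
  have hX : s < 2 * (b:ℝ) * qhi * ρ - 2 * b + P := by linarith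
  have hX2 : 4 * (b:ℝ)^2 + P^2 < (2 * (b:ℝ) * qhi * ρ - 2 * b + P)^2 := by
    nlinarith
  have hden : 0 < (b:ℝ) * ρ + qlo := by positivity
  rw [div_lt_iff₀ hden]
  nlinarith [hX2, mul_pos hB0 hq]
end
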